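/- Ahlfors–Schwarz lemma: Let g be a hermitian pseudo-metric on the unit disc Δ, written g = λ(z)|dz|², with λ upper semicontinuous, such that wherever λ > 0 its Gaussian curvature satisfies −(1/λ)Δ log λ ≤ −c for some constant c > 0 (curvature ≤ −c). Then λ(z) ≤ (2/c) · (1/(1−|z|²))², i.e. g ≤ (2/c)·g_P where g_P is the Poincaré metric of curvature −2 on Δ. -/

import Mathlib

/-!
For `r < 1` let `F w = λ w (r² - |w|²)²` on the closed disc of radius `r`. Being upper
semicontinuous, `F` attains its maximum there, and if the maximum is positive it is attained at an
interior point `z₀` with `λ z₀ > 0`. Near `z₀` the function `log F = log λ + 2 log (r² - |w|²)` is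
`C²` with a local maximum at `z₀`, so its Laplacian is `≤ 0` there (second derivative test along
the two coordinate lines). Since `Δ log λ ≥ 4 c λ` and `Δ log (r² - |w|²) = -4 r² / (r² - |w|²)²`,
this gives `F ≤ 2 r² / c` on the whole disc. Letting `r → 1` yields the bound.
-/

open Filter Set Metric Topology Laplacian InnerProductSpace Real

/-- The complex Laplacian `∂²/∂z∂z̄ = (1/4)(∂²/∂x² + ∂²/∂y²)` of a real-valued function
on `ℂ`; with this normalization `i∂∂̄ u` is identified with `lapZZbar u` times `i dz∧dz̄/2`. -/
noncomputable def lapZZbar (u : ℂ → ℝ) (z : ℂ) : ℝ :=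
  (1 / 4) * ((iteratedFDeriv ℝ 2 u z) ![1, 1] +
    (iteratedFDeriv ℝ 2 u z) ![Complex.I, Complex.I])

theorem IsLocalMax.deriv_deriv_nonpos {f : ℝ → ℝ} {x : ℝ} (h : IsLocalMax f x)
    (hc : ContinuousAt f x) : deriv (deriv f) x ≤ 0 := by
  by_contra! hpos
  -- a positive second derivative would make `x` also a local minimum, so `f` is locally constant
  have hconst : f =ᶠ[𝓝 x] fun _ => f x :=
    (h.and (isLocalMin_of_deriv_deriv_pos hpos h.deriv_eq_zero hc)).mono
      fun y hy => le_antisymm hy.1 hy.2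
  have hderiv : deriv f =ᶠ[𝓝 x] fun _ => 0 :=
    hconst.eventuallyEq_nhds.mono fun y hy => by simpa using hy.deriv_eq
  simp [hderiv.deriv_eq] at hpos

section Line

variable {E F : Type*} [NormedAddCommGroup E] [NormedSpace ℝ E] [NormedAddCommGroup F]
  [NormedSpace ℝ F]

theorem DifferentiableAt.hasDerivAt_comp_add_smul {f : E → F} {z v : E} {t : ℝ}
    (hf : DifferentiableAt ℝ f (z + t • v)) :
    HasDerivAt (fun s : ℝ => f (z + s • v)) (fderiv ℝ f (z + t • v) v) t :=
  hf.hasFDerivAt.comp_hasDerivAt t (by simpa using ((hasDerivAt_id t).smul_const v).const_add z)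

theorem tendsto_add_smul_nhds_zero (z v : E) :
    Tendsto (fun t : ℝ => z + t • v) (𝓝 0) (𝓝 z) :=
  Continuous.tendsto' (by fun_prop) 0 z (by simp)

theorem ContDiffAt.deriv_deriv_comp_add_smul {u : E → F} {z : E} (hu : ContDiffAt ℝ 2 u z)
    (v : E) : deriv (deriv fun t : ℝ => u (z + t • v)) 0 = iteratedFDeriv ℝ 2 u z ![v, v] := by
  have hfirst : deriv (fun t : ℝ => u (z + t • v)) =ᶠ[𝓝 0]
      fun t => fderiv ℝ u (z + t • v) v := by
    filter_upwards [(tendsto_add_smul_nhds_zero z v).eventually (hu.eventually (by simp))]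
      with t ht using (ht.differentiableAt (by simp)).hasDerivAt_comp_add_smul.deriv
  have hdiff : DifferentiableAt ℝ (fderiv ℝ u) (z + (0 : ℝ) • v) := by
    simpa using (hu.fderiv_right (m := 1) le_rfl).differentiableAt one_ne_zero
  have hsecond := hdiff.hasDerivAt_comp_add_smul.clm_apply (hasDerivAt_const (0 : ℝ) v)
  rw [hfirst.deriv_eq, hsecond.deriv, iteratedFDeriv_two_apply]
  simp

theorem IsLocalMax.iteratedFDeriv_two_apply_self_nonpos {u : E → ℝ} {z : E}
    (h : IsLocalMax u z) (hu : ContDiffAt ℝ 2 u z) (v : E) :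
    iteratedFDeriv ℝ 2 u z ![v, v] ≤ 0 := by
  rw [← hu.deriv_deriv_comp_add_smul]
  refine IsLocalMax.deriv_deriv_nonpos ?_ ?_
  · simpa [IsLocalMax, IsMaxFilter] using (tendsto_add_smul_nhds_zero z v).eventually h
  · exact hu.continuousAt.comp_of_eq (by fun_prop) (by simp)

end Line

theorem IsLocalMax.laplacian_nonpos {E : Type*} [NormedAddCommGroup E] [InnerProductSpace ℝ E]
    [FiniteDimensional ℝ E] {u : E → ℝ} {z : E} (h : IsLocalMax u z) (hu : ContDiffAt ℝ 2 u z) :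
    Δ u z ≤ 0 := by
  rw [laplacian_eq_iteratedFDeriv_stdOrthonormalBasis]
  exact Finset.sum_nonpos fun i _ => h.iteratedFDeriv_two_apply_self_nonpos hu _

theorem lapZZbar_eq_laplacian (u : ℂ → ℝ) (z : ℂ) : lapZZbar u z = Δ u z / 4 := by
  rw [lapZZbar, laplacian_eq_iteratedFDeriv_complexPlane]
  ring

theorem sub_norm_sq_pos {E : Type*} [SeminormedAddCommGroup E] {z : E} {r : ℝ} (hz : ‖z‖ < r) :
    0 < r ^ 2 - ‖z‖ ^ 2 :=
  sub_pos.2 (pow_lt_pow_left₀ hz (norm_nonneg z) two_ne_zero)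

theorem contDiffAt_log_sub_norm_sq {E : Type*} [NormedAddCommGroup E] [InnerProductSpace ℝ E]
    {n : WithTop ℕ∞} {z : E} {r : ℝ} (hz : ‖z‖ < r) :
    ContDiffAt ℝ n (fun w : E => log (r ^ 2 - ‖w‖ ^ 2)) z :=
  (contDiffAt_const.sub (contDiff_norm_sq ℝ).contDiffAt).log (sub_norm_sq_pos hz).ne'

theorem deriv_deriv_log_sub_sq_add {b s : ℝ} (h : s ^ 2 < b) :
    deriv (deriv fun t => log (b - (s + t) ^ 2)) 0 = -2 * (b + s ^ 2) / (b - s ^ 2) ^ 2 := by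
  have hq (t : ℝ) : HasDerivAt (fun t => b - (s + t) ^ 2) (-(2 * (s + t))) t := by
    simpa using (((hasDerivAt_id t).const_add s).pow 2).const_sub b
  have hpos : ∀ᶠ t in 𝓝 (0 : ℝ), 0 < b - (s + t) ^ 2 :=
    (hq 0).continuousAt.eventually_const_lt (by simpa using h)
  have hfirst : deriv (fun t => log (b - (s + t) ^ 2)) =ᶠ[𝓝 0]
      fun t => -(2 * (s + t)) / (b - (s + t) ^ 2) := by
    filter_upwards [hpos] with t ht using ((hq t).log ht.ne').deriv
  have hsecond := (((hasDerivAt_id' (0 : ℝ)).const_add s).const_mul 2).fun_neg.fun_div (hq 0)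
    (by simp; linarith)
  rw [hfirst.deriv_eq, hsecond.deriv, add_zero]
  have : b - s ^ 2 ≠ 0 := by linarith
  field_simp
  ring

theorem laplacian_log_sub_norm_sq {r : ℝ} {z : ℂ} (hz : ‖z‖ < r) :
    Δ (fun w : ℂ => log (r ^ 2 - ‖w‖ ^ 2)) z = -4 * r ^ 2 / (r ^ 2 - ‖z‖ ^ 2) ^ 2 := by
  have hpos := sub_norm_sq_pos hz
  have hC : ContDiffAt ℝ 2 (fun w : ℂ => log (r ^ 2 - ‖w‖ ^ 2)) z :=
    contDiffAt_log_sub_norm_sq hz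
  have hnorm : ‖z‖ ^ 2 = z.re ^ 2 + z.im ^ 2 := by
    rw [Complex.sq_norm, Complex.normSq_apply]; ring
  have hre : (fun t : ℝ => log (r ^ 2 - ‖z + t • (1 : ℂ)‖ ^ 2)) =
      fun t => log ((r ^ 2 - z.im ^ 2) - (z.re + t) ^ 2) := by
    funext t; simp [Complex.sq_norm, Complex.normSq_apply]; ring_nf
  have him : (fun t : ℝ => log (r ^ 2 - ‖z + t • Complex.I‖ ^ 2)) =
      fun t => log ((r ^ 2 - z.re ^ 2) - (z.im + t) ^ 2) := by
    funext t; simp [Complex.sq_norm, Complex.normSq_apply]; ring_nf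
  rw [laplacian_eq_iteratedFDeriv_complexPlane]
  dsimp only
  rw [← hC.deriv_deriv_comp_add_smul, ← hC.deriv_deriv_comp_add_smul, hre, him,
    deriv_deriv_log_sub_sq_add (by linarith), deriv_deriv_log_sub_sq_add (by linarith),
    show r ^ 2 - z.im ^ 2 - z.re ^ 2 = r ^ 2 - ‖z‖ ^ 2 by rw [hnorm]; ring,
    show r ^ 2 - z.re ^ 2 - z.im ^ 2 = r ^ 2 - ‖z‖ ^ 2 by rw [hnorm]; ring]
  field_simp
  ring

theorem UpperSemicontinuousOn.mul_continuousOn {α : Type*} [TopologicalSpace α] {s : Set α}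
    {f g : α → ℝ} (hf : UpperSemicontinuousOn f s) (hg : ContinuousOn g s)
    (hf₀ : ∀ x ∈ s, 0 ≤ f x) (hg₀ : ∀ x ∈ s, 0 ≤ g x) :
    UpperSemicontinuousOn (fun x => f x * g x) s := by
  intro x hx y hy
  have hlim : Tendsto (fun δ : ℝ => (f x + δ) * (g x + δ)) (𝓝[>] 0) (𝓝 (f x * g x)) := by
    apply tendsto_nhdsWithin_of_tendsto_nhds
    simpa using (Continuous.tendsto (by fun_prop) 0 :
      Tendsto (fun δ : ℝ => (f x + δ) * (g x + δ)) (𝓝 0) _)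
  obtain ⟨δ, hδy, hδ⟩ := ((hlim.eventually_lt_const hy).and self_mem_nhdsWithin).exists
  filter_upwards [hf x hx (f x + δ) (by simpa using hδ),
    (hg x hx).eventually_lt_const (lt_add_of_pos_right (g x) hδ), self_mem_nhdsWithin]
    with w hfw hgw hw
  calc f w * g w ≤ f w * (g x + δ) := mul_le_mul_of_nonneg_left hgw.le (hf₀ w hw)
    _ < (f x + δ) * (g x + δ) := mul_lt_mul_of_pos_right hfw (by linarith [hg₀ x hx, (hδ : 0 < δ)])
    _ < y := hδy

theorem mul_sq_sub_norm_sq_le_of_isLocalMax {lam : ℂ → ℝ} {c r : ℝ} {z : ℂ} (hc : 0 < c)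
    (hz : ‖z‖ < r) (hlam : 0 < lam z) (hsmooth : ContDiffAt ℝ 2 lam z)
    (hcurv : c * lam z ≤ lapZZbar (fun w => log (lam w)) z)
    (hmax : IsLocalMax (fun w => lam w * (r ^ 2 - ‖w‖ ^ 2) ^ 2) z) :
    lam z * (r ^ 2 - ‖z‖ ^ 2) ^ 2 ≤ 2 * r ^ 2 / c := by
  set φ : ℂ → ℝ := fun w => log (r ^ 2 - ‖w‖ ^ 2)
  have hφ : ContDiffAt ℝ 2 φ z := contDiffAt_log_sub_norm_sq hz
  have h2φ : ContDiffAt ℝ 2 ((2 : ℝ) • φ) z := by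
    simpa only [Pi.smul_def] using hφ.const_smul (2 : ℝ)
  have hloglam : ContDiffAt ℝ 2 (fun w => log (lam w)) z := hsmooth.log hlam.ne'
  have hlog_eq {w : ℂ} (hw : 0 < lam w) (hwr : ‖w‖ < r) :
      ((fun w => log (lam w)) + (2 : ℝ) • φ) w = log (lam w * (r ^ 2 - ‖w‖ ^ 2) ^ 2) := by
    simp [φ, log_mul hw.ne' (pow_pos (sub_norm_sq_pos hwr) 2).ne', log_pow]
  have hlogmax : IsLocalMax ((fun w => log (lam w)) + (2 : ℝ) • φ) z := by
    filter_upwards [hmax, hsmooth.continuousAt.eventually_const_lt hlam,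
      continuous_norm.continuousAt.eventually_lt_const hz] with w hw hlw hwr
    rw [hlog_eq hlw hwr, hlog_eq hlam hz]
    exact log_le_log (mul_pos hlw (pow_pos (sub_norm_sq_pos hwr) 2)) hw
  have hlap := hlogmax.laplacian_nonpos (hloglam.add h2φ)
  rw [hloglam.laplacian_add h2φ, laplacian_smul (2 : ℝ) hφ, laplacian_log_sub_norm_sq hz,
    smul_eq_mul] at hlap
  rw [lapZZbar_eq_laplacian] at hcurv
  have hd := pow_pos (sub_norm_sq_pos hz) 2
  have hbound : c * lam z * (r ^ 2 - ‖z‖ ^ 2) ^ 2 ≤ 2 * r ^ 2 := by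
    have h4 : -4 * r ^ 2 / (r ^ 2 - ‖z‖ ^ 2) ^ 2 * (r ^ 2 - ‖z‖ ^ 2) ^ 2 = -4 * r ^ 2 :=
      div_mul_cancel₀ _ hd.ne'
    nlinarith
  rw [le_div_iff₀ hc]
  linarith

theorem mul_sq_sub_norm_sq_le_of_mem_closedBall {lam : ℂ → ℝ} {c r : ℝ} (hc : 0 < c)
    (hr : r < 1) (hnn : ∀ z ∈ ball (0 : ℂ) 1, 0 ≤ lam z)
    (husc : UpperSemicontinuousOn lam (ball (0 : ℂ) 1))
    (hsmooth : ∀ z ∈ ball (0 : ℂ) 1, 0 < lam z → ContDiffAt ℝ 2 lam z)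
    (hcurv : ∀ z ∈ ball (0 : ℂ) 1, 0 < lam z →
      c * lam z ≤ lapZZbar (fun w => log (lam w)) z) :
    ∀ z ∈ closedBall (0 : ℂ) r, lam z * (r ^ 2 - ‖z‖ ^ 2) ^ 2 ≤ 2 * r ^ 2 / c := by
  intro z hz
  have hsub : closedBall (0 : ℂ) r ⊆ ball 0 1 := closedBall_subset_ball hr
  obtain ⟨z₀, hz₀, hmax⟩ := ((husc.mono hsub).mul_continuousOn
    (g := fun w => (r ^ 2 - ‖w‖ ^ 2) ^ 2) (by fun_prop)
    (fun w hw => hnn w (hsub hw)) fun _ _ => sq_nonneg _).exists_isMaxOn ⟨z, hz⟩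
    (isCompact_closedBall 0 r)
  refine (hmax hz).trans ?_
  rcases le_or_gt (lam z₀ * (r ^ 2 - ‖z₀‖ ^ 2) ^ 2) 0 with hnonpos | hpos
  · exact hnonpos.trans (by positivity)
  have hlam : 0 < lam z₀ :=
    (hnn z₀ (hsub hz₀)).lt_of_ne fun h => by simp [← h] at hpos
  have hz₀r : ‖z₀‖ < r :=
    (mem_closedBall_zero_iff.mp hz₀).lt_of_ne fun h => by simp [h] at hpos
  exact mul_sq_sub_norm_sq_le_of_isLocalMax hc hz₀r hlam (hsmooth z₀ (hsub hz₀) hlam)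
    (hcurv z₀ (hsub hz₀) hlam)
    (hmax.isLocalMax (closedBall_mem_nhds_of_mem (mem_ball_zero_iff.mpr hz₀r)))

/-- **Ahlfors–Schwarz lemma.** Let `g = λ(z)|dz|²` be a hermitian
pseudo-metric on the unit disc, `λ` upper semicontinuous (and smooth where positive), whose
Gaussian curvature is `≤ −c` wherever `λ > 0` (i.e. `∂∂̄ log λ ≥ c·λ` there), for some
`c > 0`. Then `λ(z) ≤ (2/c)·(1/(1−|z|²))²`, i.e. `g ≤ (2/c)·g_P`. -/
theorem ahlfors_schwarz
    (lam : ℂ → ℝ) (c : ℝ) (hc : 0 < c)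
    (hnn : ∀ z ∈ Metric.ball (0 : ℂ) 1, 0 ≤ lam z)
    (husc : UpperSemicontinuousOn lam (Metric.ball (0 : ℂ) 1))
    (hsmooth : ∀ z ∈ Metric.ball (0 : ℂ) 1, 0 < lam z → ContDiffAt ℝ 2 lam z)
    (hcurv : ∀ z ∈ Metric.ball (0 : ℂ) 1, 0 < lam z →
      c * lam z ≤ lapZZbar (fun w => Real.log (lam w)) z) :
    ∀ z ∈ Metric.ball (0 : ℂ) 1,
      lam z ≤ (2 / c) * (1 / (1 - ‖z‖ ^ 2)) ^ 2 := by
  intro z hz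
  have hz1 : ‖z‖ < 1 := mem_ball_zero_iff.mp hz
  have hbound : ∀ r ∈ Ioo ‖z‖ 1, lam z ≤ 2 * r ^ 2 / c / (r ^ 2 - ‖z‖ ^ 2) ^ 2 := by
    rintro r ⟨hzr, hr1⟩
    rw [le_div_iff₀ (pow_pos (sub_norm_sq_pos hzr) 2)]
    exact mul_sq_sub_norm_sq_le_of_mem_closedBall hc hr1 hnn husc hsmooth hcurv z
      (mem_closedBall_zero_iff.mpr hzr.le)
  have hd : 1 - ‖z‖ ^ 2 ≠ 0 := by simpa using (sub_norm_sq_pos hz1).ne'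
  have hlim : Tendsto (fun r : ℝ => 2 * r ^ 2 / c / (r ^ 2 - ‖z‖ ^ 2) ^ 2) (𝓝[<] 1)
      (𝓝 (2 * 1 ^ 2 / c / (1 ^ 2 - ‖z‖ ^ 2) ^ 2)) :=
    tendsto_nhdsWithin_of_tendsto_nhds
      (ContinuousAt.tendsto (by fun_prop (disch := simpa using hd)))
  refine (ge_of_tendsto hlim (eventually_of_mem (Ioo_mem_nhdsLT hz1) hbound)).trans_eq ?_
  field_simp
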